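/- arXiv:math/0512514 — 5 statements merged into one kernel-verified Lean document; each statement's English description precedes it below -/
import Mathlib

section
/- Let k be a field of characteristic zero, R a commutative k-algebra, and Δ a set of k-linear derivations of R. For every prime ideal P of R, the Δ-core (P:Δ) is a prime ideal of R. -/
section Defs

variable {k R : Type*} [CommRing k] [CommRing R] [Algebra k R]

/-- An ideal stable under all derivations in `Δ`. -/
def IsDeltaIdeal (Δ : Set (Derivation k R R)) (I : Ideal R) : Prop :=
  ∀ δ ∈ Δ, ∀ x ∈ I, δ x ∈ I

/-- The `Δ`-core of an ideal `J`: the largest `Δ`-stable ideal contained in `J`. -/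
def deltaCore (Δ : Set (Derivation k R R)) (J : Ideal R) : Ideal R :=
  sSup {I : Ideal R | IsDeltaIdeal Δ I ∧ I ≤ J}

end Defs

section Aux

variable {k R : Type*} [CommRing k] [CommRing R] [Algebra k R]

/-- Apply a word (list) of derivations to an element, head first. -/
def DCwApp : List (Derivation k R R) → R → R
  | [], x => x
  | δ :: l, x => DCwApp l (δ x)

lemma DCwApp_add (l : List (Derivation k R R)) (x y : R) :
    DCwApp l (x + y) = DCwApp l x + DCwApp l y := by
  induction l generalizing x y with
  | nil => rfl
  | cons δ l ih => show DCwApp l (δ (x + y)) = _; rw [map_add, ih]; rfl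

lemma DCwApp_zero (l : List (Derivation k R R)) : DCwApp l (0 : R) = 0 := by
  induction l with
  | nil => rfl
  | cons δ l ih => show DCwApp l (δ 0) = 0; rw [map_zero, ih]

variable (Δ : Set (Derivation k R R)) (P : Ideal R)

lemma DCwApp_mul_mem :
    ∀ (l : List (Derivation k R R)), (∀ d ∈ l, d ∈ Δ) → ∀ r x : R,
      (∀ l' : List (Derivation k R R), (∀ d ∈ l', d ∈ Δ) → DCwApp l' x ∈ P) →
      DCwApp l (r * x) ∈ P
  | [], _, r, x, hx => P.mul_mem_left r (hx [] (by simp))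
  | δ :: l, hl, r, x, hx => by
      have hlΔ : ∀ d ∈ l, d ∈ Δ := fun d hd => hl d (List.mem_cons_of_mem _ hd)
      have h1 : DCwApp (δ :: l) (r * x) = DCwApp l (δ r * x) + DCwApp l (r * δ x) := by
        show DCwApp l (δ (r * x)) = _
        rw [← DCwApp_add]
        congr 1
        rw [Derivation.leibniz, smul_eq_mul, smul_eq_mul]
        ring
      rw [h1]
      refine P.add_mem ?_ ?_
      · exact DCwApp_mul_mem l hlΔ (δ r) x hx
      · exact DCwApp_mul_mem l hlΔ r (δ x)
          (fun l' hl' => hx (δ :: l')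
            (by intro d hd; rcases List.mem_cons.mp hd with h | h
                · exact h ▸ hl δ (by simp)
                · exact hl' d h))

/-- The word-characterized core ideal. -/
def DCcore : Ideal R where
  carrier := {x | ∀ l : List (Derivation k R R), (∀ d ∈ l, d ∈ Δ) → DCwApp l x ∈ P}
  add_mem' := fun ha hb l hl => by rw [DCwApp_add]; exact P.add_mem (ha l hl) (hb l hl)
  zero_mem' := fun l _ => by rw [DCwApp_zero]; exact P.zero_mem
  smul_mem' := fun r x hx l hl => by
    rw [smul_eq_mul]; exact DCwApp_mul_mem Δ P l hl r x hx

lemma mem_DCcore {x : R} :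
    x ∈ DCcore Δ P ↔
      ∀ l : List (Derivation k R R), (∀ d ∈ l, d ∈ Δ) → DCwApp l x ∈ P := Iff.rfl

lemma DCcore_isDeltaIdeal : IsDeltaIdeal Δ (DCcore Δ P) := by
  intro δ hδ x hx l hl
  exact hx (δ :: l) (by
    intro d hd; rcases List.mem_cons.mp hd with h | h
    · exact h ▸ hδ
    · exact hl d h)

lemma DCcore_le : DCcore Δ P ≤ P := fun x hx => hx [] (by simp)

lemma le_DCcore {I : Ideal R} (hI : IsDeltaIdeal Δ I) (hIP : I ≤ P) : I ≤ DCcore Δ P := by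
  intro x hx l
  induction l generalizing x with
  | nil => exact fun _ => hIP hx
  | cons δ l ih =>
      intro hl
      exact ih (hI δ (hl δ (by simp)) x hx)
        (fun d hd => hl d (List.mem_cons_of_mem _ hd))

lemma deltaCore_eq_DCcore : deltaCore Δ P = DCcore Δ P := by
  apply le_antisymm
  · exact sSup_le (fun I hI => le_DCcore Δ P hI.1 hI.2)
  · exact le_sSup ⟨DCcore_isDeltaIdeal Δ P, DCcore_le Δ P⟩

end Aux

lemma DCnat_cancel {k R : Type*} [Field k] [CharZero k] [CommRing R] [Algebra k R]
    {m : ℕ} (hm : m ≠ 0) {I : Ideal R} {r : R} (h : (m : R) * r ∈ I) : r ∈ I := by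
  have h2 : algebraMap k R ((m : k)⁻¹) * ((m : R) * r) = r := by
    have hm' : ((m : ℕ) : R) = algebraMap k R ((m : ℕ) : k) := by rw [map_natCast]
    rw [← mul_assoc, hm', ← map_mul, inv_mul_cancel₀ (Nat.cast_ne_zero.mpr hm),
      map_one, one_mul]
  rw [← h2]
  exact I.mul_mem_left _ h

section CharZeroAux

variable {k R : Type*} [Field k] [CharZero k] [CommRing R] [Algebra k R]
variable (Δ : Set (Derivation k R R))

/-- Ritt's lemma: in characteristic zero, radicals of differential ideals are differential. -/
lemma DCritt {I : Ideal R} (hI : IsDeltaIdeal Δ I) {δ : Derivation k R R} (hδ : δ ∈ Δ)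
    {x : R} {n : ℕ} (hx : x ^ n ∈ I) : (δ x) ^ (2 * n) ∈ I := by
  have key : ∀ j, j ≤ n → x ^ (n - j) * (δ x) ^ (2 * j) ∈ I := by
    intro j
    induction j with
    | zero => intro _; simpa using hx
    | succ j ih =>
        intro hj
        have hjn : j < n := hj
        obtain ⟨p, hp⟩ : ∃ p, n - j = p + 1 := ⟨n - j - 1, by omega⟩
        have hp2 : n - (j + 1) = p := by omega
        set y := δ x with hy
        have hIj : x ^ (p + 1) * y ^ (2 * j) ∈ I := by rw [← hp]; exact ih (le_of_lt hjn)
        have h1 : δ (x ^ (p + 1) * y ^ (2 * j)) ∈ I := hI δ hδ _ hIj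
        have hgoal : ((p + 1 : ℕ) : R) * (x ^ p * y ^ (2 * j + 2)) ∈ I := by
          have heq : ((p + 1 : ℕ) : R) * (x ^ p * y ^ (2 * j + 2))
              = y * δ (x ^ (p + 1) * y ^ (2 * j))
                - ((2 * j : ℕ) : R) * δ y * (x ^ (p + 1) * y ^ (2 * j)) := by
            rw [Derivation.leibniz, Derivation.leibniz_pow, Derivation.leibniz_pow]
            rcases Nat.eq_zero_or_pos j with hj0 | hj0
            · subst hj0
              push_cast
              simp only [Nat.mul_zero, pow_zero, Nat.zero_sub, zero_smul, smul_zero,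
                Nat.add_sub_cancel, smul_eq_mul, nsmul_eq_mul]
              push_cast
              ring
            · obtain ⟨i, hi⟩ : ∃ i, j = i + 1 := ⟨j - 1, by omega⟩
              subst hi
              have h2i : 2 * (i + 1) = 2 * i + 1 + 1 := by ring
              rw [h2i]
              simp only [Nat.add_sub_cancel, smul_eq_mul, nsmul_eq_mul]
              push_cast
              ring
          rw [heq]
          exact I.sub_mem (I.mul_mem_left _ h1) (I.mul_mem_left _ hIj)
        rw [hp2, show 2 * (j + 1) = 2 * j + 2 from by ring]
        exact DCnat_cancel (k := k) (by omega) hgoal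
  simpa using key n le_rfl

end CharZeroAux

/-- Let `k` be a field of characteristic zero, `R` a commutative
`k`-algebra, and `Δ` a set of `k`-linear derivations of `R`.  For every prime ideal
`P` of `R`, the `Δ`-core `(P:Δ)` is a prime ideal of `R`. -/
theorem deltaCore_isPrime_of_isPrime
    {k R : Type*} [Field k] [CharZero k] [CommRing R] [Algebra k R]
    (Δ : Set (Derivation k R R)) (P : Ideal R) (hP : P.IsPrime) :
    (deltaCore Δ P).IsPrime := by
  rw [deltaCore_eq_DCcore]
  set Q := DCcore Δ P with hQ
  have hQd : IsDeltaIdeal Δ Q := DCcore_isDeltaIdeal Δ P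
  have hQP : Q ≤ P := DCcore_le Δ P
  -- Q is radical
  have hrad : ∀ x : R, x * x ∈ Q → x ∈ Q := by
    intro x hx
    have hradQ : Ideal.radical Q ≤ Q := by
      apply le_DCcore
      · intro δ hδ y hy
        obtain ⟨n, hn⟩ := hy
        exact ⟨2 * n, DCritt Δ hQd hδ hn⟩
      · calc Ideal.radical Q ≤ Ideal.radical P := Ideal.radical_mono hQP
          _ = P := hP.radical
    exact hradQ ⟨2, by rw [sq]; exact hx⟩
  -- key step
  have key : ∀ x y : R, x * y ∈ Q → ∀ δ ∈ Δ, (δ x) * y ∈ Q := by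
    intro x y hxy δ hδ
    have h1 : δ (x * y) ∈ Q := hQd δ hδ _ hxy
    apply hrad
    have heq : (δ x * y) * (δ x * y)
        = (δ x * y) * δ (x * y) - (δ x * δ y) * (x * y) := by
      rw [Derivation.leibniz, smul_eq_mul, smul_eq_mul]; ring
    rw [heq]
    exact Q.sub_mem (Q.mul_mem_left _ h1) (Q.mul_mem_left _ hxy)
  have keyIter : ∀ (l : List (Derivation k R R)), (∀ d ∈ l, d ∈ Δ) →
      ∀ x y : R, x * y ∈ Q → (DCwApp l x) * y ∈ Q := by
    intro l
    induction l with
    | nil => intro _ x y h; exact h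
    | cons δ l ih =>
        intro hl x y h
        exact ih (fun d hd => hl d (List.mem_cons_of_mem _ hd)) (δ x) y
          (key x y h δ (hl δ (by simp)))
  constructor
  · intro h
    exact hP.ne_top (top_unique (fun z _ => hQP (h ▸ Submodule.mem_top)))
  · intro a b hab
    by_contra hcon
    push_neg at hcon
    obtain ⟨ha, hb⟩ := hcon
    rw [hQ, mem_DCcore] at ha hb
    push_neg at ha hb
    obtain ⟨la, hla, hwa⟩ := ha
    obtain ⟨lb, hlb, hwb⟩ := hb
    have h1 : DCwApp la a * b ∈ Q := keyIter la hla a b hab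
    have h2 : DCwApp lb b * DCwApp la a ∈ Q := by
      apply keyIter lb hlb b (DCwApp la a)
      rw [mul_comm]; exact h1
    have h3 : DCwApp lb b * DCwApp la a ∈ P := hQP h2
    rcases hP.mem_or_mem h3 with h | h
    · exact hwb h
    · exact hwa h
end

section
/- Let k be a field of characteristic zero and (R,Δ) a commutative differential k-algebra. Every prime ideal of R which is minimal over a Δ-ideal of R is itself a Δ-ideal. -/
section Defs

variable {k R : Type*} [CommRing k] [CommRing R] [Algebra k R]

/-- A `Δ`-prime ideal: a proper `Δ`-ideal `Q` such that whenever a product of two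
`Δ`-ideals lies in `Q`, one of them lies in `Q`. -/
def IsDeltaPrime (Δ : Set (Derivation k R R)) (Q : Ideal R) : Prop :=
  Q ≠ ⊤ ∧ IsDeltaIdeal Δ Q ∧
    ∀ I J : Ideal R, IsDeltaIdeal Δ I → IsDeltaIdeal Δ J → I * J ≤ Q → I ≤ Q ∨ J ≤ Q

/-- A `Δ`-primitive ideal: the `Δ`-core of a maximal ideal. -/
def IsDeltaPrimitive (Δ : Set (Derivation k R R)) (P : Ideal R) : Prop :=
  ∃ M : Ideal R, M.IsMaximal ∧ deltaCore Δ M = P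

end Defs

section Aux

variable (k : Type*) {R : Type*} [Field k] [CharZero k] [CommRing R] [Algebra k R]

include k

/-- Ideals of a char-zero algebra are divisible by nonzero naturals. -/
lemma nat_mul_mem_div {I : Ideal R} {m : ℕ} (hm : m ≠ 0) {y : R}
    (h : (m : R) * y ∈ I) : y ∈ I := by
  have : y = algebraMap k R ((m : k)⁻¹) * ((m : R) * y) := by
    rw [← mul_assoc, ← map_natCast (algebraMap k R) m, ← map_mul,
      inv_mul_cancel₀ (by exact_mod_cast hm), map_one, one_mul]
  rw [this]
  exact I.mul_mem_left _ h

/-- The key descending step. -/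
lemma step {I : Ideal R} (δ : Derivation k R R) (hδI : ∀ x ∈ I, δ x ∈ I)
    {x : R} (a b : ℕ) (h : x ^ (a + 1) * (δ x) ^ b ∈ I) :
    x ^ a * (δ x) ^ (b + 2) ∈ I := by
  have h1 : δ (x ^ (a + 1) * (δ x) ^ b) * δ x ∈ I := I.mul_mem_right _ (hδI _ h)
  have h2 : x ^ (a + 1) * δ ((δ x) ^ b) * δ x ∈ I := by
    match b with
    | 0 => simp
    | (c + 1) =>
      rw [Derivation.leibniz_pow]
      simp only [Nat.add_sub_cancel, smul_eq_mul, nsmul_eq_mul]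
      have e : x ^ (a + 1) * ((↑(c + 1) : R) * ((δ x) ^ c * δ (δ x))) * δ x
          = ((↑(c + 1) : R) * δ (δ x)) * (x ^ (a + 1) * (δ x) ^ (c + 1)) := by ring
      rw [e]
      exact I.mul_mem_left _ h
  have e : δ (x ^ (a + 1) * (δ x) ^ b) * δ x
      = ((a : R) + 1) * (x ^ a * (δ x) ^ (b + 2)) + x ^ (a + 1) * δ ((δ x) ^ b) * δ x := by
    rw [Derivation.leibniz]
    simp only [Derivation.leibniz_pow, Nat.add_sub_cancel, smul_eq_mul, nsmul_eq_mul]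
    push_cast
    ring
  have h3 : ((a + 1 : ℕ) : R) * (x ^ a * (δ x) ^ (b + 2)) ∈ I := by
    have hs := I.sub_mem h1 h2
    rw [e, add_sub_cancel_right] at hs
    push_cast
    exact hs
  exact nat_mul_mem_div k (Nat.succ_ne_zero a) h3

/-- The radical of a differential ideal is differential (char 0). -/
lemma radical_isDeltaIdeal {Δ : Set (Derivation k R R)} {I : Ideal R}
    (hI : IsDeltaIdeal Δ I) : IsDeltaIdeal Δ I.radical := by
  intro δ hδ x hx
  obtain ⟨n, hn⟩ := hx
  have key : ∀ j ≤ n, x ^ (n - j) * (δ x) ^ (2 * j) ∈ I := by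
    intro j hj
    induction j with
    | zero => simpa using hn
    | succ m ih =>
      have hm : m ≤ n := le_of_lt (Nat.lt_of_succ_le hj)
      have h0 := ih hm
      have hsub : n - m = (n - (m + 1)) + 1 := by omega
      rw [hsub] at h0
      have h1 := step k δ (hI δ hδ) _ _ h0
      have h2 : 2 * m + 2 = 2 * (m + 1) := by ring
      rwa [h2] at h1
  have hfin := key n le_rfl
  simp only [Nat.sub_self, pow_zero, one_mul] at hfin
  exact ⟨2 * n, hfin⟩

end Aux

/-- Every prime ideal of `R` which is minimal over a `Δ`-ideal of `R`
is itself a `Δ`-ideal. -/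
theorem isDeltaIdeal_of_mem_minimalPrimes
    {k R : Type*} [Field k] [CharZero k] [CommRing R] [Algebra k R]
    (Δ : Set (Derivation k R R)) (I P : Ideal R)
    (hI : IsDeltaIdeal Δ I) (hP : P ∈ I.minimalPrimes) :
    IsDeltaIdeal Δ P := by
  obtain ⟨⟨hPprime, hIP⟩, hmin⟩ := hP
  -- (A) saturation of I at R \ P
  let J : Ideal R :=
    { carrier := {x | ∃ s ∉ P, s * x ∈ I}
      zero_mem' := ⟨1, hPprime.ne_top ∘ (Ideal.eq_top_iff_one P).mpr, by simp⟩
      add_mem' := by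
        rintro a b ⟨s, hs, hsa⟩ ⟨t, ht, htb⟩
        refine ⟨s * t, fun h => ((hPprime.mul_mem_iff_mem_or_mem.mp h).elim hs ht), ?_⟩
        have : s * t * (a + b) = t * (s * a) + s * (t * b) := by ring
        rw [this]
        exact I.add_mem (I.mul_mem_left _ hsa) (I.mul_mem_left _ htb)
      smul_mem' := by
        rintro c a ⟨s, hs, hsa⟩
        exact ⟨s, hs, by rw [smul_eq_mul, mul_left_comm]; exact I.mul_mem_left _ hsa⟩ }
  have hJmem : ∀ x, x ∈ J ↔ ∃ s ∉ P, s * x ∈ I := fun x => Iff.rfl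
  -- J is a Δ-ideal
  have hJdelta : IsDeltaIdeal Δ J := by
    intro δ hδ x hx
    obtain ⟨s, hs, hsx⟩ := hx
    refine ⟨s * s, fun h => (hPprime.mul_mem_iff_mem_or_mem.mp h).elim hs hs, ?_⟩
    have h1 : s * δ (s * x) ∈ I := I.mul_mem_left _ (hI δ hδ _ hsx)
    have h2 : δ s * (s * x) ∈ I := I.mul_mem_left _ hsx
    have e : s * s * δ x = s * δ (s * x) - δ s * (s * x) := by
      rw [Derivation.leibniz]
      simp only [smul_eq_mul]
      ring
    rw [e]; exact I.sub_mem h1 h2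
  -- J ≤ P
  have hJP : J ≤ P := by
    rintro x ⟨s, hs, hsx⟩
    exact (hPprime.mul_mem_iff_mem_or_mem.mp (hIP hsx)).resolve_left hs
  -- P ≤ radical J : key uses minimality
  have hPJ : P ≤ J.radical := by
    intro x hx
    -- find s ∉ P, n with s * x^n ∈ I
    by_contra hxr
    -- consider the submonoid generated by x and the complement of P
    set T : Submonoid R := Submonoid.closure ({x} ∪ (P : Set R)ᶜ) with hT
    have hform : ∀ y ∈ T, ∃ n : ℕ, ∃ s ∉ P, y = x ^ n * s := by
      intro y hy
      induction hy using Submonoid.closure_induction with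
      | mem z hz =>
        rcases hz with rfl | hz
        · exact ⟨1, 1, hPprime.ne_top ∘ (Ideal.eq_top_iff_one P).mpr, by simp⟩
        · exact ⟨0, z, hz, by simp⟩
      | one => exact ⟨0, 1, hPprime.ne_top ∘ (Ideal.eq_top_iff_one P).mpr, by simp⟩
      | mul a b _ _ iha ihb =>
        obtain ⟨n, s, hs, rfl⟩ := iha
        obtain ⟨m, t, ht, rfl⟩ := ihb
        exact ⟨n + m, s * t,
          fun h => (hPprime.mul_mem_iff_mem_or_mem.mp h).elim hs ht, by ring⟩
    have hdisj : Disjoint (I : Set R) (T : Set R) := by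
      rw [Set.disjoint_left]
      intro y hyI hyT
      obtain ⟨n, s, hs, rfl⟩ := hform y hyT
      exact hxr ⟨n, s, hs, by rwa [mul_comm]⟩
    obtain ⟨Q, hQprime, hIQ, hQdisj⟩ := Ideal.exists_le_prime_disjoint I T hdisj
    have hQP : Q ≤ P := by
      intro z hz
      by_contra hzP
      exact Set.disjoint_left.mp hQdisj hz
        (Submonoid.subset_closure (Or.inr hzP))
    have : P ≤ Q := hmin ⟨hQprime, hIQ⟩ hQP
    exact Set.disjoint_left.mp hQdisj (this hx)
      (Submonoid.subset_closure (Or.inl rfl))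
  -- radical J = P
  have hrad : J.radical = P :=
    le_antisymm (hPprime.radical ▸ Ideal.radical_mono hJP) hPJ
  have := radical_isDeltaIdeal k hJdelta
  rwa [hrad] at this
end

section
/- Let k be a field of characteristic zero and (R,Δ) a commutative differential k-algebra with R noetherian. Then every Δ-prime ideal of R is a prime ideal. -/
/-!
Seidenberg's lemma (in characteristic zero the radical of a `Δ`-ideal is a `Δ`-ideal) together
with the noetherian bound `(√Q)ⁿ ≤ Q` makes a `Δ`-prime ideal `Q` radical. For a radical
`Δ`-ideal `Q`, the identity `(δx · y)² = δx · y · δ(xy) - δx · δy · xy` shows that `xy ∈ Q`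
implies `δx · y ∈ Q`, so every colon ideal `Q : S` is a `Δ`-ideal. If `ab ∈ Q`, the `Δ`-ideals
`A = Q : {b}` and `B = Q : A` satisfy `a ∈ A`, `b ∈ B` and `AB ≤ Q`, and `Δ`-primality gives
`a ∈ Q` or `b ∈ Q`.
-/

section DeltaIdeal

variable {k R : Type*} [CommRing k] [CommRing R] [Algebra k R] {Δ : Set (Derivation k R R)}

theorem IsDeltaIdeal.mul {I J : Ideal R} (hI : IsDeltaIdeal Δ I) (hJ : IsDeltaIdeal Δ J) :
    IsDeltaIdeal Δ (I * J) := by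
  intro δ hδ x hx
  refine Submodule.mul_induction_on hx (fun a ha b hb => ?_)
    (fun x y hx hy => by rw [map_add]; exact add_mem hx hy)
  rw [Derivation.leibniz, smul_eq_mul, smul_eq_mul, mul_comm b]
  exact add_mem (Ideal.mul_mem_mul ha (hJ δ hδ b hb)) (Ideal.mul_mem_mul (hI δ hδ a ha) hb)

theorem IsDeltaIdeal.pow {I : Ideal R} (hI : IsDeltaIdeal Δ I) : ∀ n : ℕ, IsDeltaIdeal Δ (I ^ n)
  | 0 => fun _ _ _ _ => by simp
  | n + 1 => by rw [pow_succ]; exact (hI.pow n).mul hI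

theorem IsDeltaPrime.le_of_pow_le {Q J : Ideal R} (hQ : IsDeltaPrime Δ Q)
    (hJ : IsDeltaIdeal Δ J) : ∀ {n : ℕ}, J ^ n ≤ Q → J ≤ Q
  | 0, h => absurd (top_le_iff.1 (by simpa using h)) hQ.1
  | n + 1, h => by
    rw [pow_succ] at h
    exact (hQ.2.2 _ _ (hJ.pow n) hJ h).elim (hQ.le_of_pow_le hJ) id

theorem IsDeltaIdeal.deriv_mul_mem {Q : Ideal R} (hQ : IsDeltaIdeal Δ Q) (hrad : Q.IsRadical)
    {δ : Derivation k R R} (hδ : δ ∈ Δ) {x y : R} (h : x * y ∈ Q) : δ x * y ∈ Q := by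
  refine (Ideal.isRadical_iff_pow_one_lt 2 one_lt_two).1 hrad _ ?_
  have hδxy : x * δ y + y * δ x ∈ Q := by simpa [Derivation.leibniz] using hQ δ hδ _ h
  have hsq : (δ x * y) ^ 2 = δ x * y * (x * δ y + y * δ x) - δ x * δ y * (x * y) := by ring
  rw [hsq]
  exact Q.sub_mem (Q.mul_mem_left _ hδxy) (Q.mul_mem_left _ h)

theorem IsDeltaIdeal.colon {Q : Ideal R} (hQ : IsDeltaIdeal Δ Q) (hrad : Q.IsRadical) (S : Set R) :
    IsDeltaIdeal Δ (Q.colon S) := by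
  intro δ hδ x hx
  rw [Submodule.mem_colon] at hx ⊢
  exact fun s hs => hQ.deriv_mul_mem hrad hδ (hx s hs)

end DeltaIdeal

section Seidenberg

variable {k R : Type*} [Field k] [CharZero k] [CommRing R] [Algebra k R]
  {Δ : Set (Derivation k R R)} {I : Ideal R}

theorem IsDeltaIdeal.pow_mul_deriv_pow_mem (hI : IsDeltaIdeal Δ I) {δ : Derivation k R R}
    (hδ : δ ∈ Δ) {a : R} {m s : ℕ} (h : a ^ (m + 1) * δ a ^ s ∈ I) :
    a ^ m * δ a ^ (s + 2) ∈ I := by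
  have hunit : IsUnit ((m + 1 : ℕ) : R) := by
    rw [← map_natCast (algebraMap k R)]
    exact (IsUnit.mk0 _ (Nat.cast_ne_zero.2 m.succ_ne_zero)).map _
  have hderiv : δ a * δ (a ^ (m + 1) * δ a ^ s) =
      ((m + 1 : ℕ) : R) * (a ^ m * δ a ^ (s + 2)) + s * δ (δ a) * (a ^ (m + 1) * δ a ^ s) := by
    rw [Derivation.leibniz, Derivation.leibniz_pow, Derivation.leibniz_pow]
    rcases s with _ | s <;> simp only [smul_eq_mul, nsmul_eq_mul] <;> push_cast <;> ring
  rw [← Ideal.unit_mul_mem_iff_mem I hunit, eq_sub_of_add_eq hderiv.symm]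
  exact I.sub_mem (I.mul_mem_left _ (hI δ hδ _ h)) (I.mul_mem_left _ h)

theorem IsDeltaIdeal.deriv_pow_mem_of_pow_mul_mem (hI : IsDeltaIdeal Δ I) {δ : Derivation k R R}
    (hδ : δ ∈ Δ) {a : R} : ∀ {m s : ℕ}, a ^ m * δ a ^ s ∈ I → δ a ^ (s + 2 * m) ∈ I
  | 0, _, h => by simpa using h
  | m + 1, s, h => by
    have := hI.deriv_pow_mem_of_pow_mul_mem hδ (hI.pow_mul_deriv_pow_mem hδ h)
    rwa [add_assoc, add_comm 2, ← mul_add_one] at this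

/-- Seidenberg's lemma. -/
theorem IsDeltaIdeal.radical (hI : IsDeltaIdeal Δ I) : IsDeltaIdeal Δ I.radical := by
  rintro δ hδ a ⟨n, hn⟩
  exact ⟨0 + 2 * n, hI.deriv_pow_mem_of_pow_mul_mem hδ (m := n) (by simpa using hn)⟩

theorem IsDeltaPrime.isRadical [IsNoetherianRing R] {Q : Ideal R} (hQ : IsDeltaPrime Δ Q) :
    Q.IsRadical := by
  obtain ⟨n, hn⟩ := Q.exists_radical_pow_le_of_fg (IsNoetherian.noetherian _)
  exact hQ.le_of_pow_le hQ.2.1.radical hn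

end Seidenberg

/-- If `R` is noetherian, every `Δ`-prime ideal of `R` is prime. -/
theorem isPrime_of_isDeltaPrime
    {k R : Type*} [Field k] [CharZero k] [CommRing R] [Algebra k R] [IsNoetherianRing R]
    (Δ : Set (Derivation k R R)) (Q : Ideal R) (hQ : IsDeltaPrime Δ Q) :
    Q.IsPrime := by
  have hrad := hQ.isRadical
  refine ⟨hQ.1, fun {a b} hab => ?_⟩
  set A := Q.colon {b}
  set B := Q.colon (A : Set R)
  have haA : a ∈ A := Submodule.mem_colon.2 fun _ hs => hs ▸ hab
  have hbB : b ∈ B := Submodule.mem_colon.2 fun x hx => by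
    simpa [mul_comm] using Submodule.mem_colon.1 hx b rfl
  have hAB : A * B ≤ Q := Ideal.mul_le.2 fun x hx y hy => by
    simpa [mul_comm] using Submodule.mem_colon.1 hy x hx
  exact (hQ.2.2 A B (hQ.2.1.colon hrad _) (hQ.2.1.colon hrad _) hAB).imp
    (fun h => h haA) (fun h => h hbB)
end

section
/- Let k be a field of characteristic zero, G an abelian group, and (R,Δ) a commutative G-graded differential k-algebra such that R is a graded field. Then the Δ-center Z_Δ(R) is a homogeneous (graded) subalgebra of R, and the set G_Z = {x ∈ G : Z_Δ(R) ∩ R_x ≠ 0} is a subgroup of G; moreover Z_Δ(R) is strongly graded by G_Z, i.e., (Z_Δ(R) ∩ R_x)(Z_Δ(R) ∩ R_y) = Z_Δ(R) ∩ R_{xy} for all x, y ∈ G_Z. -/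
/-- The `Δ`-center of `R`: elements annihilated by every derivation in `Δ`. -/
def deltaCenter {k R : Type*} [CommRing k] [CommRing R] [Algebra k R]
    (Δ : Set (Derivation k R R)) : Subalgebra k R where
  carrier := {r : R | ∀ δ ∈ Δ, δ r = 0}
  mul_mem' := by
    intro a b ha hb δ hδ
    rw [Derivation.leibniz, ha δ hδ, hb δ hδ, smul_zero, smul_zero, add_zero]
  add_mem' := by
    intro a b ha hb δ hδ
    rw [map_add, ha δ hδ, hb δ hδ, add_zero]
  algebraMap_mem' := by
    intro c δ hδ
    simp

/-- The homogeneous `k`-derivations of degree `d` with respect to a grading `𝒜`: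
those `δ` with `δ(R_g) ⊆ R_{g+d}` for all `g`. -/
def homogeneousDerivations {k R G : Type*} [CommRing k] [CommRing R] [Algebra k R]
    [AddCommGroup G] (𝒜 : G → Submodule k R) (d : G) :
    Submodule k (Derivation k R R) where
  carrier := {δ : Derivation k R R | ∀ g : G, ∀ x ∈ 𝒜 g, δ x ∈ 𝒜 (g + d)}
  add_mem' := by
    intro a b ha hb g x hx
    rw [Derivation.add_apply]
    exact Submodule.add_mem _ (ha g x hx) (hb g x hx)
  zero_mem' := by
    intro g x hx
    simp
  smul_mem' := by
    intro c δ hδ g x hx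
    rw [Derivation.smul_apply]
    exact Submodule.smul_mem _ c (hδ g x hx)

/-- `R` is a graded field with respect to `𝒜`: a domain in which every nonzero
homogeneous element is invertible. -/
def IsGradedField {k R G : Type*} [CommRing k] [CommRing R] [Algebra k R]
    (𝒜 : G → Submodule k R) : Prop :=
  IsDomain R ∧ ∀ (g : G) (x : R), x ∈ 𝒜 g → x ≠ 0 → IsUnit x


open DirectSum in
open scoped Classical in
lemma homogDer_comp_aux {k R G : Type*} [CommRing k] [CommRing R] [Algebra k R]
    [AddCommGroup G] [DecidableEq G] (𝒜 : G → Submodule k R) [GradedAlgebra 𝒜]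
    {d : G} {δ : Derivation k R R} (hδ : δ ∈ homogeneousDerivations 𝒜 d)
    {r : R} (hr : δ r = 0) (g : G) :
    δ (decompose 𝒜 r g : R) = 0 := by
  have hsum : δ r = ∑ i ∈ DFinsupp.support (decompose 𝒜 r), δ (decompose 𝒜 r i : R) := by
    conv_lhs => rw [← DirectSum.sum_support_decompose 𝒜 r]
    exact map_sum δ _ _
  have key : δ (decompose 𝒜 r g : R) = (decompose 𝒜 (δ r) (g + d) : R) := by
    conv_rhs => rw [← GradedRing.proj_apply, hsum]
    rw [map_sum (GradedRing.proj 𝒜 (g + d))]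
    rw [Finset.sum_eq_single g]
    · rw [GradedRing.proj_apply, decompose_of_mem_same 𝒜 (hδ g _ (decompose 𝒜 r g).2)]
    · intro b _ hb
      rw [GradedRing.proj_apply, decompose_of_mem_ne 𝒜 (hδ b _ (decompose 𝒜 r b).2)]
      simpa using hb
    · intro hg
      rw [DFinsupp.notMem_support_iff.mp hg]
      simp
  rw [key, hr]
  simp

open DirectSum in
open scoped Classical in
lemma center_comp_aux {k R G : Type*} [CommRing k] [CommRing R] [Algebra k R]
    [AddCommGroup G] [DecidableEq G] {𝒜 : G → Submodule k R} [GradedAlgebra 𝒜]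
    {Δ : Submodule k (Derivation k R R)}
    (hΔ : Δ = ⨆ d : G, (homogeneousDerivations 𝒜 d ⊓ Δ))
    {r : R} (hr : ∀ δ ∈ Δ, δ r = 0) (g : G) :
    ∀ δ ∈ Δ, δ (decompose 𝒜 r g : R) = 0 := by
  let T : Submodule k (Derivation k R R) :=
    { carrier := {δ : Derivation k R R | δ (decompose 𝒜 r g : R) = 0},
      add_mem' := fun {a b} ha hb => by
        simp only [Set.mem_setOf_eq] at *
        rw [Derivation.add_apply, ha, hb, add_zero],
      zero_mem' := by simp,
      smul_mem' := fun c a ha => by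
        simp only [Set.mem_setOf_eq] at *
        rw [Derivation.smul_apply, ha, smul_zero] }
  have hle : Δ ≤ T := by
    conv_lhs => rw [hΔ]
    refine iSup_le fun d => fun δ hδ => ?_
    exact homogDer_comp_aux 𝒜 hδ.1 (hr δ hδ.2) g
  exact fun δ hδ => hle hδ

open DirectSum in
lemma exists_inv_central_aux {k R G : Type*} [CommRing k] [CommRing R] [Algebra k R]
    [AddCommGroup G] [DecidableEq G] {𝒜 : G → Submodule k R} [GradedAlgebra 𝒜]
    {Δ : Submodule k (Derivation k R R)}
    (hΔ : Δ = ⨆ d : G, (homogeneousDerivations 𝒜 d ⊓ Δ))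
    (hgf : IsGradedField 𝒜) {g : G} {x : R}
    (hx0 : x ≠ 0) (hxc : ∀ δ ∈ Δ, δ x = 0) (hxg : x ∈ 𝒜 g) :
    ∃ v : R, v ∈ 𝒜 (-g) ∧ (∀ δ ∈ Δ, δ v = 0) ∧ x * v = 1 := by
  haveI : IsDomain R := hgf.1
  obtain ⟨xu, hxu⟩ := hgf.2 g x hxg hx0
  set u : R := ((xu⁻¹ : Rˣ) : R) with hu
  have hxu1 : x * u = 1 := by rw [hu, ← hxu]; exact xu.mul_inv
  have huc : ∀ δ ∈ Δ, δ u = 0 := by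
    intro δ hδ
    have h0 : δ (x * u) = 0 := by rw [hxu1]; simp
    rw [Derivation.leibniz, hxc δ hδ, smul_zero, add_zero, smul_eq_mul] at h0
    rcases mul_eq_zero.mp h0 with h | h
    · exact absurd h hx0
    · exact h
  refine ⟨(decompose 𝒜 u (-g) : R), (decompose 𝒜 u (-g)).2,
    center_comp_aux hΔ huc (-g), ?_⟩
  have key : (decompose 𝒜 (x * u) (g + -g) : R) = x * (decompose 𝒜 u (-g) : R) :=
    DirectSum.coe_decompose_mul_add_of_left_mem 𝒜 hxg
  rw [hxu1, add_neg_cancel] at key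
  rw [← key]
  exact decompose_of_mem_same 𝒜 (SetLike.one_mem_graded 𝒜)

/-- Let `G` be an abelian group and `(R,Δ)` a commutative `G`-graded
differential `k`-algebra (`Δ` a subspace of `Der_k(R)` which is the sum of its
subspaces of homogeneous derivations of the various degrees) such that `R` is a graded
field.  Then the `Δ`-center `Z_Δ(R)` is a homogeneous subalgebra of `R`, the set
`G_Z = {x ∈ G : Z_Δ(R) ∩ R_x ≠ 0}` is a subgroup of `G`, and `Z_Δ(R)` is strongly
graded by `G_Z`:  `(Z_Δ(R) ∩ R_x)(Z_Δ(R) ∩ R_y) = Z_Δ(R) ∩ R_{x+y}` for `x, y ∈ G_Z`. -/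
theorem deltaCenter_homogeneous_stronglyGraded
    {k R G : Type*} [Field k] [CharZero k] [CommRing R] [Algebra k R]
    [AddCommGroup G] [DecidableEq G]
    (𝒜 : G → Submodule k R) [GradedAlgebra 𝒜]
    (Δ : Submodule k (Derivation k R R))
    (hΔ : Δ = ⨆ d : G, (homogeneousDerivations 𝒜 d ⊓ Δ))
    (hgf : IsGradedField 𝒜) :
    -- Z_Δ(R) is a homogeneous (graded) subalgebra
    (∀ r ∈ deltaCenter (Δ : Set (Derivation k R R)), ∀ g : G,
      (DirectSum.decompose 𝒜 r g : R) ∈ deltaCenter (Δ : Set (Derivation k R R))) ∧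
    -- G_Z is a subgroup of G
    (∃ S : AddSubgroup G, (S : Set G) =
      {g : G | ∃ x : R, x ≠ 0 ∧ x ∈ deltaCenter (Δ : Set (Derivation k R R)) ∧ x ∈ 𝒜 g}) ∧
    -- Z_Δ(R) is strongly graded by G_Z
    (∀ g h : G,
      g ∈ {g : G | ∃ x : R, x ≠ 0 ∧ x ∈ deltaCenter (Δ : Set (Derivation k R R)) ∧ x ∈ 𝒜 g} →
      h ∈ {g : G | ∃ x : R, x ≠ 0 ∧ x ∈ deltaCenter (Δ : Set (Derivation k R R)) ∧ x ∈ 𝒜 g} →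
      {z : R | ∃ a b : R,
          a ∈ deltaCenter (Δ : Set (Derivation k R R)) ∧ a ∈ 𝒜 g ∧
          b ∈ deltaCenter (Δ : Set (Derivation k R R)) ∧ b ∈ 𝒜 h ∧ z = a * b} =
        {z : R | z ∈ deltaCenter (Δ : Set (Derivation k R R)) ∧ z ∈ 𝒜 (g + h)}) := by
  haveI : IsDomain R := hgf.1
  have hmem : ∀ r : R, r ∈ deltaCenter (Δ : Set (Derivation k R R)) ↔ ∀ δ ∈ Δ, δ r = 0 :=
    fun r => Iff.rfl
  refine ⟨?_, ?_, ?_⟩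
  · intro r hr g
    exact (hmem _).mpr (center_comp_aux hΔ ((hmem r).mp hr) g)
  · have hadd : ∀ {a b : G}, a ∈ {g : G | ∃ x : R, x ≠ 0 ∧
        x ∈ deltaCenter (Δ : Set (Derivation k R R)) ∧ x ∈ 𝒜 g} →
        b ∈ {g : G | ∃ x : R, x ≠ 0 ∧
        x ∈ deltaCenter (Δ : Set (Derivation k R R)) ∧ x ∈ 𝒜 g} →
        a + b ∈ {g : G | ∃ x : R, x ≠ 0 ∧
        x ∈ deltaCenter (Δ : Set (Derivation k R R)) ∧ x ∈ 𝒜 g} := by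
      rintro a b ⟨x, hx0, hxc, hxg⟩ ⟨y, hy0, hyc, hyg⟩
      exact ⟨x * y, mul_ne_zero hx0 hy0, mul_mem hxc hyc, SetLike.mul_mem_graded hxg hyg⟩
    have hneg : ∀ {a : G}, a ∈ {g : G | ∃ x : R, x ≠ 0 ∧
        x ∈ deltaCenter (Δ : Set (Derivation k R R)) ∧ x ∈ 𝒜 g} →
        -a ∈ {g : G | ∃ x : R, x ≠ 0 ∧
        x ∈ deltaCenter (Δ : Set (Derivation k R R)) ∧ x ∈ 𝒜 g} := by
      rintro a ⟨x, hx0, hxc, hxg⟩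
      obtain ⟨v, hvg, hvc, hxv⟩ := exists_inv_central_aux hΔ hgf hx0 ((hmem x).mp hxc) hxg
      refine ⟨v, ?_, (hmem v).mpr hvc, hvg⟩
      intro h0
      rw [h0, mul_zero] at hxv
      exact zero_ne_one hxv
    have hzero : (0 : G) ∈ {g : G | ∃ x : R, x ≠ 0 ∧
        x ∈ deltaCenter (Δ : Set (Derivation k R R)) ∧ x ∈ 𝒜 g} :=
      ⟨1, one_ne_zero, (hmem 1).mpr (fun δ _ => by simp), SetLike.one_mem_graded 𝒜⟩
    exact ⟨AddSubgroup.mk (AddSubmonoid.mk (AddSubsemigroup.mk _ hadd) hzero) hneg, rfl⟩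
  · intro g h hg _
    obtain ⟨x, hx0, hxc, hxg⟩ := hg
    ext z
    simp only [Set.mem_setOf_eq]
    constructor
    · rintro ⟨a, b, hac, hag, hbc, hbg, rfl⟩
      exact ⟨mul_mem hac hbc, SetLike.mul_mem_graded hag hbg⟩
    · rintro ⟨hzc, hzg⟩
      obtain ⟨v, hvg, hvc, hxv⟩ := exists_inv_central_aux hΔ hgf hx0 ((hmem x).mp hxc) hxg
      refine ⟨x, v * z, hxc, hxg, mul_mem ((hmem v).mpr hvc) hzc, ?_, ?_⟩
      · have : v * z ∈ 𝒜 (-g + (g + h)) := SetLike.mul_mem_graded hvg hzg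
        rwa [neg_add_cancel_left] at this
      · rw [← mul_assoc, hxv, one_mul]
end

section
/- Let k be a field of characteristic zero, G an abelian group, and (R,Δ) a commutative G-graded differential k-algebra such that R is a graded field. Suppose the subgroup G_Z = {x ∈ G : Z_Δ(R) ∩ R_x ≠ 0} of G is free abelian of finite rank with basis {g_1,…,g_n}, and choose nonzero elements z_j ∈ Z_Δ(R) ∩ R_{g_j} for each j. Then Z_Δ(R_1) := Z_Δ(R) ∩ R_1 is a field, each z_j is invertible in Z_Δ(R), and Z_Δ(R) is a Laurent polynomial ring Z_Δ(R_1)[z_1^{±1},…,z_n^{±1}]: the Laurent monomials z_1^{m_1}⋯z_n^{m_n}, (m_1,…,m_n) ∈ ℤ^n, form a basis of Z_Δ(R) as a vector space over Z_Δ(R_1). -/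
/-!
A homogeneous derivation of degree `d` sends the degree-`i` component of `x` to the
degree-`(i + d)` component of `δ x`; since `Δ` is spanned by homogeneous derivations, the
homogeneous components of a `Δ`-central element are again `Δ`-central. Inverses of central
units are central, and the inverse of a unit of degree `i` has degree `-i`. Hence a nonzero
central homogeneous `x` of degree `∑ mⱼ • gⱼ` is `(x * z^(-m)) * z^m` with `x * z^(-m)` in
`Z_Δ(R₁)`, which gives both that `Z_Δ(R₁)` is a field and that the monomials span. The
monomials have pairwise distinct degrees because the `gⱼ` are independent, and they are units,
so a vanishing combination of them has vanishing coefficients degree by degree.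
-/

open DirectSum

section GradedUnits

variable {ι A σ : Type*} [DecidableEq ι] [SetLike σ A] (𝒜 : ι → σ)

theorem Units.val_inv_mem_graded_neg [AddGroup ι] [Semiring A] [AddSubmonoidClass σ A]
    [GradedRing 𝒜] {u : Aˣ} {i : ι} (hu : (u : A) ∈ 𝒜 i) : ((u⁻¹ : Aˣ) : A) ∈ 𝒜 (-i) := by
  -- the degree `-i` component of `u⁻¹` is already a right inverse of `u`
  have h : (u : A) * decompose 𝒜 ((u⁻¹ : Aˣ) : A) (-i) = 1 := by
    rw [← coe_decompose_mul_add_of_left_mem 𝒜 hu, Units.mul_inv, add_neg_cancel,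
      decompose_of_mem_same 𝒜 SetLike.GradedOne.one_mem]
  rw [Units.inv_eq_of_mul_eq_one_right h]
  exact SetLike.coe_mem _

theorem Units.val_zpow_mem_graded [AddGroup ι] [Semiring A] [AddSubmonoidClass σ A]
    [GradedRing 𝒜] {u : Aˣ} {i : ι} (hu : (u : A) ∈ 𝒜 i) (m : ℤ) :
    ((u ^ m : Aˣ) : A) ∈ 𝒜 (m • i) := by
  cases m with
  | ofNat p =>
    rw [Int.ofNat_eq_natCast, zpow_natCast, Units.val_pow_eq_pow_val, natCast_zsmul]
    exact SetLike.pow_mem_graded p hu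
  | negSucc p =>
    rw [zpow_negSucc, negSucc_zsmul]
    apply Units.val_inv_mem_graded_neg 𝒜
    rw [Units.val_pow_eq_pow_val]
    exact SetLike.pow_mem_graded _ hu

theorem Units.val_prod_zpow_mem_graded {κ : Type*} [Fintype κ] [AddCommGroup ι] [CommSemiring A]
    [AddSubmonoidClass σ A] [GradedRing 𝒜] {u : κ → Aˣ} {i : κ → ι}
    (hu : ∀ j, (u j : A) ∈ 𝒜 (i j)) (m : κ → ℤ) :
    ((∏ j, u j ^ m j : Aˣ) : A) ∈ 𝒜 (∑ j, m j • i j) := by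
  rw [Units.coe_prod]
  exact SetLike.prod_mem_graded 𝒜 _ _ fun j _ => Units.val_zpow_mem_graded 𝒜 (hu j) (m j)

end GradedUnits

section LaurentBasis

variable {ι A σ M : Type*} [DecidableEq ι] [Semiring A] [SetLike σ A] [AddSubmonoidClass σ A]
  (𝒜 : ι → σ)

theorem exists_eq_finsupp_sum_mul_units_of_isHomogeneous [AddGroup ι] [GradedRing 𝒜]
    {T : Type*} [SetLike T A] [SubsemiringClass T A] {S : T} (hS : SetLike.IsHomogeneous 𝒜 S)
    {mono : M → Aˣ} {deg : M → ι} (hmono : ∀ m, (mono m : A) ∈ 𝒜 (deg m))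
    (hmono_inv : ∀ m, (((mono m)⁻¹ : Aˣ) : A) ∈ S)
    (hdeg : ∀ i, ∀ r ∈ S, r ∈ 𝒜 i → r ≠ 0 → ∃ m, deg m = i) {x : A} (hx : x ∈ S) :
    ∃ c : M →₀ A, (∀ m, c m ∈ S ∧ c m ∈ 𝒜 0) ∧ x = c.sum fun m a => a * mono m := by
  classical
  set P : A → Prop := fun x =>
    ∃ c : M →₀ A, (∀ m, c m ∈ S ∧ c m ∈ 𝒜 0) ∧ x = c.sum fun m a => a * mono m
  have hzero : P 0 := ⟨0, fun _ => ⟨zero_mem _, zero_mem _⟩, Finsupp.sum_zero_index.symm⟩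
  have hadd : ∀ x y, P x → P y → P (x + y) := by
    rintro x y ⟨c, hc, rfl⟩ ⟨d, hd, rfl⟩
    refine ⟨c + d, fun m => ?_, ?_⟩
    · exact ⟨add_mem (hc m).1 (hd m).1, add_mem (hc m).2 (hd m).2⟩
    · exact (Finsupp.sum_add_index' (fun _ => zero_mul _) fun _ _ _ => add_mul _ _ _).symm
  have hhom : ∀ i, ∀ r ∈ S, r ∈ 𝒜 i → P r := by
    intro i r hrS hri
    obtain rfl | hr0 := eq_or_ne r 0
    · exact hzero
    obtain ⟨m, rfl⟩ := hdeg i r hrS hri hr0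
    refine ⟨Finsupp.single m (r * ((mono m)⁻¹ : Aˣ)), fun m' => ?_, ?_⟩
    · rw [Finsupp.single_apply]
      split_ifs
      · refine ⟨mul_mem hrS (hmono_inv m), ?_⟩
        simpa only [add_neg_cancel] using
          SetLike.mul_mem_graded hri (Units.val_inv_mem_graded_neg 𝒜 (hmono m))
      · exact ⟨zero_mem _, zero_mem _⟩
    · rw [Finsupp.sum_single_index (zero_mul _), mul_assoc, Units.inv_mul, mul_one]
  rw [← sum_support_decompose 𝒜 x]
  exact Finset.sum_induction _ P hadd hzero fun i _ => hhom i _ (hS i hx) (SetLike.coe_mem _)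

theorem finsupp_eq_zero_of_sum_mul_units_eq_zero [AddMonoid ι] [GradedRing 𝒜]
    {mono : M → Aˣ} {deg : M → ι} (hdeg : Function.Injective deg)
    (hmono : ∀ m, (mono m : A) ∈ 𝒜 (deg m)) {c : M →₀ A} (hc : ∀ m, c m ∈ 𝒜 0)
    (hsum : (c.sum fun m a => a * mono m) = 0) : c = 0 := by
  have hterm : ∀ m, c m * mono m ∈ 𝒜 (deg m) := fun m => by
    simpa only [zero_add] using SetLike.mul_mem_graded (hc m) (hmono m)
  ext m₀
  have h : c m₀ * mono m₀ = 0 := calc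
    c m₀ * mono m₀ = (decompose 𝒜 (c.sum fun m a => a * mono m) (deg m₀) : A) := by
      rw [Finsupp.sum, decompose_sum, DFinsupp.finsetSum_apply,
        AddSubmonoidClass.coe_finsetSum, Finset.sum_eq_single m₀
          (fun m _ hm => decompose_of_mem_ne 𝒜 (hterm m) (hdeg.ne hm))
          (fun hm₀ => by rw [Finsupp.notMem_support_iff.mp hm₀, zero_mul, decompose_zero]; rfl),
        decompose_of_mem_same 𝒜 (hterm m₀)]
    _ = 0 := by rw [hsum, decompose_zero]; rfl
  exact (Units.mul_left_eq_zero _).mp h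

end LaurentBasis

section DeltaCenter

variable {k R G : Type*} [CommRing k] [CommRing R] [Algebra k R]

theorem val_inv_mem_deltaCenter {Δ : Set (Derivation k R R)} {u : Rˣ}
    (hu : (u : R) ∈ deltaCenter Δ) : ((u⁻¹ : Rˣ) : R) ∈ deltaCenter Δ := fun δ hδ => by
  rw [δ.leibniz_of_mul_eq_one u.inv_mul, hu δ hδ, smul_zero]

variable [AddCommGroup G] [DecidableEq G] {𝒜 : G → Submodule k R} [GradedAlgebra 𝒜]

theorem coe_decompose_apply_of_mem_homogeneousDerivations {δ : Derivation k R R} {d : G}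
    (hδ : δ ∈ homogeneousDerivations 𝒜 d) (x : R) (i : G) :
    (decompose 𝒜 (δ x) (i + d) : R) = δ (decompose 𝒜 x i) := by
  induction x using DirectSum.Decomposition.inductionOn 𝒜 with
  | zero => simp
  | @homogeneous j y =>
    obtain rfl | hji := eq_or_ne j i
    · rw [decompose_of_mem_same 𝒜 (hδ j y y.2), decompose_coe, of_eq_same]
    · rw [decompose_of_mem_ne 𝒜 (hδ j y y.2) (by simpa using hji), decompose_coe,
        of_eq_of_ne _ _ _ hji.symm, ZeroMemClass.coe_zero, map_zero]
  | add x y hx hy => rw [map_add, decompose_add, decompose_add, DirectSum.add_apply, DirectSum.add_apply,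
      Submodule.coe_add, Submodule.coe_add, map_add, hx, hy]

theorem isHomogeneous_deltaCenter {Δ : Submodule k (Derivation k R R)}
    (hΔ : Δ ≤ ⨆ d : G, homogeneousDerivations 𝒜 d ⊓ Δ) :
    SetLike.IsHomogeneous 𝒜 (deltaCenter (Δ : Set (Derivation k R R))) := by
  intro i x hx δ hδ
  replace hδ := hΔ hδ
  induction hδ using Submodule.iSup_induction' with
  | mem d δ hδd =>
    rw [← coe_decompose_apply_of_mem_homogeneousDerivations hδd.1, hx δ hδd.2,
      decompose_zero, DirectSum.zero_apply, ZeroMemClass.coe_zero]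
  | zero => rfl
  | add δ δ' _ _ h h' => rw [Derivation.add_apply, h, h', add_zero]

end DeltaCenter

theorem deltaCenter_laurent_over_field_general
    {k R G : Type*} [Field k] [CommRing R] [Algebra k R]
    [AddCommGroup G] [DecidableEq G]
    (𝒜 : G → Submodule k R) [GradedAlgebra 𝒜]
    (Δ : Submodule k (Derivation k R R))
    (hΔ : Δ = ⨆ d : G, (homogeneousDerivations 𝒜 d ⊓ Δ))
    (hgf : IsGradedField 𝒜)
    (n : ℕ) (g : Fin n → G)
    -- `g` is a basis of the free abelian group `G_Z`
    (hgspan : ∀ x ∈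
      {x : G | ∃ r : R, r ≠ 0 ∧ r ∈ deltaCenter (Δ : Set (Derivation k R R)) ∧ r ∈ 𝒜 x},
      ∃ m : Fin n → ℤ, x = ∑ j, m j • g j)
    (hgindep : ∀ m : Fin n → ℤ, (∑ j, m j • g j) = 0 → m = 0)
    -- the chosen nonzero homogeneous central elements
    (z : Fin n → R) (hz : ∀ j, z j ≠ 0 ∧
      z j ∈ deltaCenter (Δ : Set (Derivation k R R)) ∧ z j ∈ 𝒜 (g j)) :
    -- Z_Δ(R₁) = Z_Δ(R) ∩ R_0 is a field
    (∀ x : R, x ∈ deltaCenter (Δ : Set (Derivation k R R)) → x ∈ 𝒜 (0 : G) → x ≠ 0 →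
      ∃ y : R, y ∈ deltaCenter (Δ : Set (Derivation k R R)) ∧ y ∈ 𝒜 (0 : G) ∧ x * y = 1) ∧
    -- each z j is invertible in Z_Δ(R), and the Laurent monomials in the z j form a
    -- basis of Z_Δ(R) over Z_Δ(R₁)
    (∃ u : Fin n → Rˣ, (∀ j, (u j : R) = z j) ∧
      (∀ j, (((u j)⁻¹ : Rˣ) : R) ∈ deltaCenter (Δ : Set (Derivation k R R))) ∧
      -- the Laurent monomials span Z_Δ(R) over Z_Δ(R₁)
      (∀ x ∈ deltaCenter (Δ : Set (Derivation k R R)),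
        ∃ c : (Fin n → ℤ) →₀ R,
          (∀ m, c m ∈ deltaCenter (Δ : Set (Derivation k R R)) ∧ c m ∈ 𝒜 (0 : G)) ∧
          x = c.sum fun m a => a * ((∏ j, u j ^ m j : Rˣ) : R)) ∧
      -- the Laurent monomials are linearly independent over Z_Δ(R₁)
      (∀ c : (Fin n → ℤ) →₀ R,
        (∀ m, c m ∈ deltaCenter (Δ : Set (Derivation k R R)) ∧ c m ∈ 𝒜 (0 : G)) →
        (c.sum fun m a => a * ((∏ j, u j ^ m j : Rˣ) : R)) = 0 → c = 0)) := by
  set Z := deltaCenter (Δ : Set (Derivation k R R))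
  refine ⟨fun x hxZ hx0 hx => ?_, ?_⟩
  · obtain ⟨v, rfl⟩ := hgf.2 0 x hx0 hx
    refine ⟨_, val_inv_mem_deltaCenter hxZ, ?_, v.mul_inv⟩
    simpa only [neg_zero] using Units.val_inv_mem_graded_neg 𝒜 hx0
  let u j := (hgf.2 (g j) (z j) (hz j).2.2 (hz j).1).unit
  have hu : ∀ j, (u j : R) = z j := fun j => IsUnit.unit_spec _
  have huZ : ∀ j, u j ∈ Z.toSubmonoid.units := fun j =>
    Z.toSubmonoid.mem_units_of_val_mem_inv_val_mem ((hu j).symm ▸ (hz j).2.1)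
      (val_inv_mem_deltaCenter ((hu j).symm ▸ (hz j).2.1))
  have hu𝒜 : ∀ j, (u j : R) ∈ 𝒜 (g j) := fun j => (hu j).symm ▸ (hz j).2.2
  have hmonoZ : ∀ m : Fin n → ℤ, (∏ j, u j ^ m j) ∈ Z.toSubmonoid.units := fun m =>
    prod_mem fun j _ => zpow_mem (huZ j) (m j)
  have hdeg : Function.Injective fun m : Fin n → ℤ => ∑ j, m j • g j := fun a b hab =>
    sub_eq_zero.mp <| hgindep _ <| by
      simpa only [Pi.sub_apply, sub_smul, Finset.sum_sub_distrib, sub_eq_zero] using hab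
  refine ⟨u, hu, fun j => (huZ j).2, fun x hx => ?_, fun c hc hsum => ?_⟩
  · exact exists_eq_finsupp_sum_mul_units_of_isHomogeneous 𝒜
      (isHomogeneous_deltaCenter hΔ.le) (Units.val_prod_zpow_mem_graded 𝒜 hu𝒜)
      (fun m => (hmonoZ m).2)
      (fun i r hrZ hri hr0 => (hgspan i ⟨r, hr0, hrZ, hri⟩).imp fun _ => Eq.symm) hx
  · exact finsupp_eq_zero_of_sum_mul_units_eq_zero 𝒜 hdeg
      (Units.val_prod_zpow_mem_graded 𝒜 hu𝒜) (fun m => (hc m).2) hsum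

/-- Let `(R,Δ)` be a commutative `G`-graded differential `k`-algebra
with `R` a graded field, and suppose `G_Z = {x : Z_Δ(R) ∩ R_x ≠ 0}` is free abelian of
finite rank with basis `g 0, …, g (n-1)`; choose nonzero `z j ∈ Z_Δ(R) ∩ R_{g j}`.
Then `Z_Δ(R₁) = Z_Δ(R) ∩ R_0` is a field, each `z j` is invertible in `Z_Δ(R)`, and the
Laurent monomials in the `z j` form a basis of `Z_Δ(R)` as a `Z_Δ(R₁)`-vector space. -/
theorem deltaCenter_laurent_over_field
    {k R G : Type*} [Field k] [CharZero k] [CommRing R] [Algebra k R]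
    [AddCommGroup G] [DecidableEq G]
    (𝒜 : G → Submodule k R) [GradedAlgebra 𝒜]
    (Δ : Submodule k (Derivation k R R))
    (hΔ : Δ = ⨆ d : G, (homogeneousDerivations 𝒜 d ⊓ Δ))
    (hgf : IsGradedField 𝒜)
    (n : ℕ) (g : Fin n → G)
    -- `g` is a basis of the free abelian group `G_Z`
    (hgmem : ∀ j, g j ∈
      {x : G | ∃ r : R, r ≠ 0 ∧ r ∈ deltaCenter (Δ : Set (Derivation k R R)) ∧ r ∈ 𝒜 x})
    (hgspan : ∀ x ∈
      {x : G | ∃ r : R, r ≠ 0 ∧ r ∈ deltaCenter (Δ : Set (Derivation k R R)) ∧ r ∈ 𝒜 x},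
      ∃ m : Fin n → ℤ, x = ∑ j, m j • g j)
    (hgindep : ∀ m : Fin n → ℤ, (∑ j, m j • g j) = 0 → m = 0)
    -- the chosen nonzero homogeneous central elements
    (z : Fin n → R) (hz : ∀ j, z j ≠ 0 ∧
      z j ∈ deltaCenter (Δ : Set (Derivation k R R)) ∧ z j ∈ 𝒜 (g j)) :
    -- Z_Δ(R₁) = Z_Δ(R) ∩ R_0 is a field
    (∀ x : R, x ∈ deltaCenter (Δ : Set (Derivation k R R)) → x ∈ 𝒜 (0 : G) → x ≠ 0 →
      ∃ y : R, y ∈ deltaCenter (Δ : Set (Derivation k R R)) ∧ y ∈ 𝒜 (0 : G) ∧ x * y = 1) ∧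
    -- each z j is invertible in Z_Δ(R), and the Laurent monomials in the z j form a
    -- basis of Z_Δ(R) over Z_Δ(R₁)
    (∃ u : Fin n → Rˣ, (∀ j, (u j : R) = z j) ∧
      (∀ j, (((u j)⁻¹ : Rˣ) : R) ∈ deltaCenter (Δ : Set (Derivation k R R))) ∧
      -- the Laurent monomials span Z_Δ(R) over Z_Δ(R₁)
      (∀ x ∈ deltaCenter (Δ : Set (Derivation k R R)),
        ∃ c : (Fin n → ℤ) →₀ R,
          (∀ m, c m ∈ deltaCenter (Δ : Set (Derivation k R R)) ∧ c m ∈ 𝒜 (0 : G)) ∧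
          x = c.sum fun m a => a * ((∏ j, u j ^ m j : Rˣ) : R)) ∧
      -- the Laurent monomials are linearly independent over Z_Δ(R₁)
      (∀ c : (Fin n → ℤ) →₀ R,
        (∀ m, c m ∈ deltaCenter (Δ : Set (Derivation k R R)) ∧ c m ∈ 𝒜 (0 : G)) →
        (c.sum fun m a => a * ((∏ j, u j ^ m j : Rˣ) : R)) = 0 → c = 0)) :=
  deltaCenter_laurent_over_field_general 𝒜 Δ hΔ hgf n g hgspan hgindep z hz
end
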